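/- arXiv:1306.4369 — 2 statements merged into one kernel-verified Lean document; each statement's English description precedes it below -/
import Mathlib

section
/- Axiomatisation of Θ_{1/2}: the theory Θ_{1/2} is the deductive closure of the single formula (¬X₁→X₁) ∧ (X₁→¬X₁), where α ∧ β abbreviates ¬(¬α ∨ ¬β) and α ∨ β abbreviates (α→β)→β; i.e., for every α ∈ Form₁, α ∈ Θ_{1/2} if and only if {(¬X₁→X₁) ∧ (X₁→¬X₁)} ⊢ α. -/
/-- Formulas of Łukasiewicz infinite-valued propositional logic:
propositional variables `var n` (with `X₁ = var 0`), falsum `⊥`, negation, implication. -/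
inductive LForm : Type
  | var : ℕ → LForm
  | bot : LForm
  | neg : LForm → LForm
  | imp : LForm → LForm → LForm

namespace LForm

/-- The propositional variable X₁. -/
def X1 : LForm := var 0

/-- Lattice disjunction: α ∨ β := (α → β) → β. -/
def or (α β : LForm) : LForm := imp (imp α β) β

/-- Lattice conjunction: α ∧ β := ¬(¬α ∨ ¬β). -/
def and (α β : LForm) : LForm := neg (or (neg α) (neg β))

/-- Biconditional: α ↔ β := (α → β) ∧ (β → α). -/
def iff (α β : LForm) : LForm := and (imp α β) (imp β α)

/-- Strong disjunction: α ⊕ β := ¬α → β. -/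
def oplus (α β : LForm) : LForm := imp (neg α) β

/-- The predicate "all variables occurring in the formula are X₁". -/
def onlyX1 : LForm → Prop
  | var n => n = 0
  | bot => True
  | neg α => onlyX1 α
  | imp α β => onlyX1 α ∧ onlyX1 β

end LForm

/-- Form₁: the set of formulas built from the single variable X₁ (and ⊥, ¬, →). -/
def Form1 : Set LForm := { α | α.onlyX1 }

/-- Provability in Łukasiewicz logic from a set `S` of assumptions: the smallest
relation containing the members of `S` and all instances of the axiom schemata
(A0)–(A4), closed under modus ponens. -/
inductive LProv (S : Set LForm) : LForm → Prop
  | hyp {α : LForm} : α ∈ S → LProv S α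
  | a0 (α : LForm) : LProv S (LForm.bot.imp α)
  | a1 (α β : LForm) : LProv S (α.imp (β.imp α))
  | a2 (α β γ : LForm) : LProv S ((α.imp β).imp ((β.imp γ).imp (α.imp γ)))
  | a3 (α β : LForm) : LProv S (((α.imp β).imp β).imp ((β.imp α).imp α))
  | a4 (α β : LForm) : LProv S ((α.neg.imp β.neg).imp (β.imp α))
  | mp {α β : LForm} : LProv S (α.imp β) → LProv S α → LProv S β

/-- A [0,1]-valued evaluation (possible world) for Łukasiewicz logic. -/
structure LEval where
  w : LForm → ℝ
  mem01 : ∀ α, w α ∈ Set.Icc (0 : ℝ) 1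
  map_bot : w LForm.bot = 0
  map_neg : ∀ α, w α.neg = 1 - w α
  map_imp : ∀ α β, w (α.imp β) = min 1 (1 - (w α - w β))

/-- Semantic consequence: every evaluation making all of `S` true (value 1)
makes `α` true. -/
def LSem (S : Set LForm) (α : LForm) : Prop :=
  ∀ v : LEval, (∀ β ∈ S, v.w β = 1) → v.w α = 1

/-- The evaluation determined compositionally by an atomic assignment `v`. -/
def evalFun (v : ℕ → ℝ) : LForm → ℝ
  | .var n => v n
  | .bot => 0
  | .neg α => 1 - evalFun v α
  | .imp α β => min 1 (1 - (evalFun v α - evalFun v β))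

/-- Θ_r: the one-variable formulas true (value 1) in every possible world `w`
with `w(X₁) = r`. -/
def Theta (r : ℝ) : Set LForm :=
  { α | α ∈ Form1 ∧ ∀ v : LEval, v.w LForm.X1 = r → v.w α = 1 }

/-- Θ_T: the one-variable formulas true (value 1) in every possible world `w`
with `w(X₁) ∈ T`. -/
def ThetaT (T : Set ℝ) : Set LForm :=
  { α | α ∈ Form1 ∧ ∀ v : LEval, v.w LForm.X1 ∈ T → v.w α = 1 }


section Aux
variable {S : Set LForm}

lemma lid (α : LForm) : LProv S (α.imp α) :=
  (LProv.mp (LProv.mp (LProv.a2 α (LForm.imp (LForm.imp LForm.bot LForm.bot) α) α) (LProv.a1 α (LForm.imp LForm.bot LForm.bot))) (LProv.mp (LProv.a3 α (LForm.imp LForm.bot LForm.bot)) (LProv.mp (LProv.a1 (LForm.imp LForm.bot LForm.bot) (LForm.imp α (LForm.imp LForm.bot LForm.bot))) (LProv.a0 LForm.bot))))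

lemma lefq (α β : LForm) : LProv S (α.neg.imp (α.imp β)) :=
  (LProv.mp (LProv.mp (LProv.a2 (LForm.neg α) (LForm.imp (LForm.neg β) (LForm.neg α)) (LForm.imp α β)) (LProv.a1 (LForm.neg α) (LForm.neg β))) (LProv.a4 β α))

lemma lassert (α β : LForm) : LProv S (α.imp ((α.imp β).imp β)) :=
  (LProv.mp (LProv.mp (LProv.a2 α (LForm.imp (LForm.imp β α) α) (LForm.imp (LForm.imp α β) β)) (LProv.a1 α (LForm.imp β α))) (LProv.a3 β α))

lemma ldne (α : LForm) : LProv S (α.neg.neg.imp α) :=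
  (LProv.mp (LProv.mp (LProv.a2 (LForm.neg (LForm.neg α)) (LForm.imp (LForm.imp LForm.bot LForm.bot) α) α) (LProv.mp (LProv.mp (LProv.a2 (LForm.neg (LForm.neg α)) (LForm.imp (LForm.neg α) (LForm.neg (LForm.imp LForm.bot LForm.bot))) (LForm.imp (LForm.imp LForm.bot LForm.bot) α)) (LProv.mp (LProv.mp (LProv.a2 (LForm.neg (LForm.neg α)) (LForm.imp (LForm.neg (LForm.neg (LForm.imp LForm.bot LForm.bot))) (LForm.neg (LForm.neg α))) (LForm.imp (LForm.neg α) (LForm.neg (LForm.imp LForm.bot LForm.bot)))) (LProv.a1 (LForm.neg (LForm.neg α)) (LForm.neg (LForm.neg (LForm.imp LForm.bot LForm.bot))))) (LProv.a4 (LForm.neg (LForm.imp LForm.bot LForm.bot)) (LForm.neg α)))) (LProv.a4 α (LForm.imp LForm.bot LForm.bot)))) (LProv.mp (LProv.a3 α (LForm.imp LForm.bot LForm.bot)) (LProv.mp (LProv.a1 (LForm.imp LForm.bot LForm.bot) (LForm.imp α (LForm.imp LForm.bot LForm.bot))) (LProv.a0 LForm.bot))))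

lemma ldni (α : LForm) : LProv S (α.imp α.neg.neg) :=
  (LProv.mp (LProv.a4 (LForm.neg (LForm.neg α)) α) (LProv.mp (LProv.mp (LProv.a2 (LForm.neg (LForm.neg (LForm.neg α))) (LForm.imp (LForm.imp LForm.bot LForm.bot) (LForm.neg α)) (LForm.neg α)) (LProv.mp (LProv.mp (LProv.a2 (LForm.neg (LForm.neg (LForm.neg α))) (LForm.imp (LForm.neg (LForm.neg α)) (LForm.neg (LForm.imp LForm.bot LForm.bot))) (LForm.imp (LForm.imp LForm.bot LForm.bot) (LForm.neg α))) (LProv.mp (LProv.mp (LProv.a2 (LForm.neg (LForm.neg (LForm.neg α))) (LForm.imp (LForm.neg (LForm.neg (LForm.imp LForm.bot LForm.bot))) (LForm.neg (LForm.neg (LForm.neg α)))) (LForm.imp (LForm.neg (LForm.neg α)) (LForm.neg (LForm.imp LForm.bot LForm.bot)))) (LProv.a1 (LForm.neg (LForm.neg (LForm.neg α))) (LForm.neg (LForm.neg (LForm.imp LForm.bot LForm.bot))))) (LProv.a4 (LForm.neg (LForm.imp LForm.bot LForm.bot)) (LForm.neg (LForm.neg α))))) (LProv.a4 (LForm.neg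 α) (LForm.imp LForm.bot LForm.bot)))) (LProv.mp (LProv.a3 (LForm.neg α) (LForm.imp LForm.bot LForm.bot)) (LProv.mp (LProv.a1 (LForm.imp LForm.bot LForm.bot) (LForm.imp (LForm.neg α) (LForm.imp LForm.bot LForm.bot))) (LProv.a0 LForm.bot)))))

/-- syllogism rule -/
lemma lsyl {α β γ : LForm} (h1 : LProv S (α.imp β)) (h2 : LProv S (β.imp γ)) :
    LProv S (α.imp γ) :=
  LProv.mp (LProv.mp (LProv.a2 α β γ) h1) h2

/-- B rule: from β→γ infer (δ→β)→(δ→γ) -/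
lemma lB {β γ : LForm} (δ : LForm) (h : LProv S (β.imp γ)) :
    LProv S ((δ.imp β).imp (δ.imp γ)) :=
  lsyl (LProv.a2 δ β γ) (LProv.mp (lassert (β.imp γ) (δ.imp γ)) h)

/-- contraposition theorem -/
lemma lctr (α β : LForm) : LProv S ((α.imp β).imp (β.neg.imp α.neg)) :=
  lsyl (lsyl (LProv.mp (LProv.a2 α.neg.neg α β) (ldne α)) (lB α.neg.neg (ldni β)))
    (LProv.a4 α.neg β.neg)

/-- contraposition rule -/
lemma lctrR {α β : LForm} (h : LProv S (α.imp β)) : LProv S (β.neg.imp α.neg) :=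
  LProv.mp (lctr α β) h

/-- apply a premise inside: from γ→(δ→ε) and δ infer γ→ε -/
lemma limpL {γ δ ε : LForm} (h : LProv S (γ.imp (δ.imp ε))) (hd : LProv S δ) :
    LProv S (γ.imp ε) :=
  lsyl h (LProv.mp (lassert δ ε) hd)

lemma lnotbot : LProv S LForm.bot.neg :=
  LProv.mp (lctrR (LProv.a0 (LForm.bot.imp LForm.bot).neg))
    (LProv.mp (ldni (LForm.bot.imp LForm.bot)) (lid LForm.bot))

lemma landL (a b : LForm) : LProv S ((a.and b).imp a) :=
  lsyl (lctrR (lassert a.neg b.neg)) (ldne a)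

lemma landR (a b : LForm) : LProv S ((a.and b).imp b) :=
  lsyl (lctrR (LProv.a1 b.neg (a.neg.imp b.neg))) (ldne b)

end Aux

/-- the single hypothesis -/
def Hyp : LForm := (LForm.X1.neg.imp LForm.X1).and (LForm.X1.imp LForm.X1.neg)

abbrev S0 : Set LForm := {Hyp}

lemma hHyp : LProv S0 Hyp := LProv.hyp rfl

lemma hNXX : LProv S0 (LForm.X1.neg.imp LForm.X1) :=
  LProv.mp (landL _ _) hHyp

lemma hXNX : LProv S0 (LForm.X1.imp LForm.X1.neg) :=
  LProv.mp (landR _ _) hHyp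

/-- trichotomy at 1/2 -/
lemma trichotomy (α : LForm) (h : α.onlyX1) :
    (evalFun (fun _ => 1/2) α = 1 ∧ LProv S0 α) ∨
    (evalFun (fun _ => 1/2) α = 0 ∧ LProv S0 α.neg) ∨
    (evalFun (fun _ => 1/2) α = 1/2 ∧ LProv S0 (α.imp LForm.X1) ∧ LProv S0 (LForm.X1.imp α)) := by
  induction α with
  | var n =>
    have hn : n = 0 := h
    subst hn
    exact Or.inr (Or.inr ⟨rfl, lid _, lid _⟩)
  | bot =>
    exact Or.inr (Or.inl ⟨rfl, lnotbot⟩)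
  | neg α ih =>
    rcases ih h with ⟨hv, hp⟩ | ⟨hv, hp⟩ | ⟨hv, hp1, hp2⟩
    · refine Or.inr (Or.inl ⟨?_, LProv.mp (ldni α) hp⟩)
      simp only [evalFun]; rw [hv]; norm_num [min_def]
    · refine Or.inl ⟨?_, hp⟩
      simp only [evalFun]; rw [hv]; norm_num [min_def]
    · refine Or.inr (Or.inr ⟨?_, ?_, ?_⟩)
      · simp only [evalFun]; rw [hv]; norm_num [min_def]
      · exact lsyl (lctrR hp2) hNXX
      · exact lsyl hXNX (lctrR hp1)
  | imp α β ihα ihβ =>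
    rcases ihα h.1 with ⟨ha, hpa⟩ | ⟨ha, hpa⟩ | ⟨ha, hpa1, hpa2⟩ <;>
      rcases ihβ h.2 with ⟨hb, hpb⟩ | ⟨hb, hpb⟩ | ⟨hb, hpb1, hpb2⟩
    · exact Or.inl ⟨by simp only [evalFun]; rw [ha, hb]; norm_num [min_def], LProv.mp (LProv.a1 β α) hpb⟩
    · refine Or.inr (Or.inl ⟨by simp only [evalFun]; rw [ha, hb]; norm_num [min_def], ?_⟩)
      exact LProv.mp (lctrR (limpL (lctr α β) hpb)) (LProv.mp (ldni α) hpa)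
    · refine Or.inr (Or.inr ⟨by simp only [evalFun]; rw [ha, hb]; norm_num [min_def], ?_, ?_⟩)
      · exact lsyl (LProv.mp (lassert α β) hpa) hpb1
      · exact lsyl hpb2 (LProv.a1 β α)
    · exact Or.inl ⟨by simp only [evalFun]; rw [ha, hb]; norm_num [min_def], LProv.mp (lefq α β) hpa⟩
    · exact Or.inl ⟨by simp only [evalFun]; rw [ha, hb]; norm_num [min_def], LProv.mp (lefq α β) hpa⟩
    · exact Or.inl ⟨by simp only [evalFun]; rw [ha, hb]; norm_num [min_def], LProv.mp (lefq α β) hpa⟩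
    · exact Or.inl ⟨by simp only [evalFun]; rw [ha, hb]; norm_num [min_def], LProv.mp (LProv.a1 β α) hpb⟩
    · refine Or.inr (Or.inr ⟨by simp only [evalFun]; rw [ha, hb]; norm_num [min_def], ?_, ?_⟩)
      · exact lsyl (limpL (lctr α β) hpb) (lsyl (lctrR hpa2) hNXX)
      · exact lsyl (lsyl hXNX (lctrR hpa1)) (lefq α β)
    · exact Or.inl ⟨by simp only [evalFun]; rw [ha, hb]; norm_num [min_def], lsyl hpa1 hpb2⟩

lemma w_imp_eq_one_iff (v : LEval) (α β : LForm) :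
    v.w (α.imp β) = 1 ↔ v.w α ≤ v.w β := by
  rw [v.map_imp, min_eq_left_iff]
  constructor <;> intro h <;> linarith

/-- soundness -/
lemma soundness {S : Set LForm} {α : LForm} (h : LProv S α) :
    ∀ v : LEval, (∀ β ∈ S, v.w β = 1) → v.w α = 1 := by
  induction h with
  | hyp hm => exact fun v hv => hv _ hm
  | a0 α =>
    intro v _
    have h1 := v.mem01 α
    rw [w_imp_eq_one_iff]; simp only [v.map_imp, v.map_neg, v.map_bot]
    exact h1.1
  | a1 α β =>
    intro v _
    have h1 := v.mem01 α; have h2 := v.mem01 β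
    rw [w_imp_eq_one_iff]; simp only [v.map_imp, v.map_neg, v.map_bot]
    simp only [min_def]; split_ifs <;> linarith [h1.1, h1.2, h2.1, h2.2]
  | a2 α β γ =>
    intro v _
    have h1 := v.mem01 α; have h2 := v.mem01 β; have h3 := v.mem01 γ
    rw [w_imp_eq_one_iff]; simp only [v.map_imp, v.map_neg, v.map_bot]
    simp only [min_def]; split_ifs <;> linarith [h1.1, h1.2, h2.1, h2.2, h3.1, h3.2]
  | a3 α β =>
    intro v _
    have h1 := v.mem01 α; have h2 := v.mem01 β
    rw [w_imp_eq_one_iff]; simp only [v.map_imp, v.map_neg, v.map_bot]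
    simp only [min_def]; split_ifs <;> linarith [h1.1, h1.2, h2.1, h2.2]
  | a4 α β =>
    intro v _
    have h1 := v.mem01 α; have h2 := v.mem01 β
    rw [w_imp_eq_one_iff]; simp only [v.map_imp, v.map_neg, v.map_bot]
    simp only [min_def]; split_ifs <;> linarith [h1.1, h1.2, h2.1, h2.2]
  | mp hab ha ihab iha =>
    intro v hv
    have h1 := (w_imp_eq_one_iff v _ _).mp (ihab v hv)
    have h2 := iha v hv
    rw [h2] at h1
    exact le_antisymm (v.mem01 _).2 h1

lemma evalFun_mem01 (f : ℕ → ℝ) (hf : ∀ n, f n ∈ Set.Icc (0:ℝ) 1) :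
    ∀ α, evalFun f α ∈ Set.Icc (0:ℝ) 1 := by
  intro α
  induction α with
  | var n => exact hf n
  | bot => simp [evalFun]
  | neg α ih =>
    obtain ⟨h1, h2⟩ := ih
    exact ⟨by simp [evalFun]; linarith, by simp [evalFun]; linarith⟩
  | imp α β ihα ihβ =>
    obtain ⟨h1, h2⟩ := ihα; obtain ⟨h3, h4⟩ := ihβ
    refine ⟨le_min (by norm_num) (by simp [evalFun]; linarith), ?_⟩
    · show min 1 (1 - (evalFun f α - evalFun f β)) ≤ 1
      exact min_le_left _ _

/-- canonical evaluation from an atomic assignment -/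
def canEval (f : ℕ → ℝ) (hf : ∀ n, f n ∈ Set.Icc (0:ℝ) 1) : LEval where
  w := evalFun f
  mem01 := evalFun_mem01 f hf
  map_bot := rfl
  map_neg := fun _ => rfl
  map_imp := fun _ _ => rfl

/-- Axiomatisation of Θ_{1/2}: for every α ∈ Form₁, α ∈ Θ_{1/2} iff
{(¬X₁ → X₁) ∧ (X₁ → ¬X₁)} ⊢ α. -/

theorem Theta_half_axiomatised (α : LForm) (hα : α ∈ Form1) :
    α ∈ Theta (1 / 2) ↔
      LProv {(LForm.X1.neg.imp LForm.X1).and (LForm.X1.imp LForm.X1.neg)} α := by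
  constructor
  · intro hθ
    have hmem : ∀ n, (fun _ : ℕ => (1:ℝ)/2) n ∈ Set.Icc (0:ℝ) 1 := by
      intro n; constructor <;> norm_num
    have h1 : evalFun (fun _ => 1/2) α = 1 := by
      have := hθ.2 (canEval (fun _ => 1/2) hmem) (by norm_num [canEval, LForm.X1, evalFun])
      exact this
    rcases trichotomy α hα with ⟨_, hp⟩ | ⟨hv, _⟩ | ⟨hv, _, _⟩
    · exact hp
    · rw [h1] at hv; norm_num at hv
    · rw [h1] at hv; norm_num at hv
  · intro hp
    refine ⟨hα, fun v hv => ?_⟩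
    refine soundness hp v ?_
    intro β hβ
    rw [Set.mem_singleton_iff] at hβ
    subst hβ
    have hx := hv
    simp only [LForm.and, LForm.or, LForm.X1] at *
    rw [v.map_neg, v.map_imp, v.map_neg, v.map_imp, v.map_neg, v.map_imp, v.map_neg,
      v.map_imp, v.map_neg, v.map_imp, v.map_neg, hx]
    norm_num
end

section
/- Finite axiomatisability criterion: for r ∈ [0,1], the theory Θ_r is finitely axiomatisable in Ł₁ (i.e., there exists a finite set S ⊆ Form₁ with Θ_r = {α ∈ Form₁ : S ⊢ α}) if and only if r is a rational number. -/
/-!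
At a rational point `p/q` every one-variable formula takes a value in `(1/q)ℤ ∩ [0,1]`, a finite
set. Choose one representative formula for each value. The finitely many implications between
`X₁`, `⊥`, representatives, their negations and their pairwise implications that are true at `r`,
together with the true representatives, prove (by induction on formulas) that every formula is
equivalent to the representative of its value; hence they axiomatise `Θ_r`.

At an irrational point `r` every formula is, near `r`, affine with integer coefficients, so a
formula true at `r` is true on a neighbourhood of `r`; by soundness so is everything provable
from a finite subset of `Θ_r`. But bisecting `[0,1]` around `r` gives formulas `γ` rising linearly
from `0` to `1` on dyadic intervals of length `2⁻ᵏ` around `r`, and a multiple `n·γ` is true at `r`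
and false at the left end of that interval.
-/

open Set Filter Topology

namespace LProv

variable {S : Set LForm} {α β γ α' β' : LForm}

theorem imp_trans (h₁ : LProv S (α.imp β)) (h₂ : LProv S (β.imp γ)) : LProv S (α.imp γ) :=
  mp (mp (a2 α β γ) h₁) h₂

theorem imp_imp_of (γ : LForm) (h : LProv S α) : LProv S ((α.imp γ).imp γ) :=
  mp (a3 γ α) (mp (a1 α (γ.imp α)) h)

theorem imp_imp_imp_left (α : LForm) (h : LProv S (β.imp γ)) :
    LProv S ((α.imp β).imp (α.imp γ)) :=
  imp_trans (a2 α β γ) (imp_imp_of (α.imp γ) h)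

theorem imp_congr (h₁ : LProv S (α'.imp α)) (h₂ : LProv S (β.imp β')) :
    LProv S ((α.imp β).imp (α'.imp β')) :=
  imp_trans (mp (a2 α' α β) h₁) (imp_imp_imp_left α' h₂)

theorem neg_imp (α β : LForm) : LProv S (α.neg.imp (α.imp β)) :=
  imp_trans (a1 α.neg β.neg) (a4 β α)

theorem neg_neg_imp (α : LForm) : LProv S (α.neg.neg.imp α) :=
  imp_trans (imp_trans (neg_imp α.neg (LForm.bot.imp α).neg) (a4 α (LForm.bot.imp α)))
    (imp_imp_of α (a0 α))

theorem imp_neg_neg (α : LForm) : LProv S (α.imp α.neg.neg) :=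
  mp (a4 α.neg.neg α) (neg_neg_imp α.neg)

theorem neg_imp_neg (h : LProv S (α.imp β)) : LProv S (β.neg.imp α.neg) :=
  mp (a4 α.neg β.neg) (imp_trans (imp_trans (neg_neg_imp α) h) (imp_neg_neg β))

end LProv

def ProvEquiv (S : Set LForm) (α β : LForm) : Prop :=
  LProv S (α.imp β) ∧ LProv S (β.imp α)

namespace ProvEquiv

variable {S : Set LForm} {α β γ α' β' : LForm}

theorem trans (h₁ : ProvEquiv S α β) (h₂ : ProvEquiv S β γ) : ProvEquiv S α γ :=
  ⟨h₁.1.imp_trans h₂.1, h₂.2.imp_trans h₁.2⟩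

theorem neg (h : ProvEquiv S α β) : ProvEquiv S α.neg β.neg :=
  ⟨LProv.neg_imp_neg h.2, LProv.neg_imp_neg h.1⟩

theorem imp (hα : ProvEquiv S α α') (hβ : ProvEquiv S β β') :
    ProvEquiv S (α.imp β) (α'.imp β') :=
  ⟨LProv.imp_congr hα.2 hβ.1, LProv.imp_congr hα.1 hβ.2⟩

end ProvEquiv

theorem LProv.sound {S : Set LForm} {α : LForm} (h : LProv S α) : LSem S α := by
  intro e hS
  have h0 φ : 0 ≤ e.w φ := (e.mem01 φ).1
  have h1 φ : e.w φ ≤ 1 := (e.mem01 φ).2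
  induction h with
  | hyp h => exact hS _ h
  | a0 α =>
    simp only [e.map_imp, e.map_bot, min_def]; split_ifs <;> linarith [h0 α, h1 α]
  | a1 α β =>
    simp only [e.map_imp, min_def]; split_ifs <;> linarith [h0 α, h1 α, h0 β, h1 β]
  | a2 α β γ =>
    simp only [e.map_imp, min_def]; split_ifs <;> linarith [h0 α, h1 α, h0 β, h1 β, h0 γ, h1 γ]
  | a3 α β =>
    simp only [e.map_imp, min_def]; split_ifs <;> linarith [h0 α, h1 α, h0 β, h1 β]
  | a4 α β =>
    simp only [e.map_imp, e.map_neg, min_def]; split_ifs <;> linarith [h0 α, h1 α, h0 β, h1 β]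
  | @mp α β _ _ ihab iha =>
    rw [e.map_imp, iha, min_def] at ihab
    split_ifs at ihab <;> linarith [h0 β, h1 β]

theorem evalFun_mem_Icc {v : ℕ → ℝ} (hv : ∀ n, v n ∈ Icc (0 : ℝ) 1) (α : LForm) :
    evalFun v α ∈ Icc (0 : ℝ) 1 := by
  induction α with
  | var n => exact hv n
  | bot => simp [evalFun]
  | neg α ih => simp only [evalFun, mem_Icc] at ih ⊢; constructor <;> linarith
  | imp α β ihα ihβ =>
    simp only [evalFun, mem_Icc] at ihα ihβ ⊢
    exact ⟨le_min zero_le_one (by linarith), min_le_left _ _⟩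

def LEval.ofAssignment (v : ℕ → ℝ) (hv : ∀ n, v n ∈ Icc (0 : ℝ) 1) : LEval where
  w := evalFun v
  mem01 := evalFun_mem_Icc hv
  map_bot := rfl
  map_neg _ := rfl
  map_imp _ _ := rfl

theorem LEval.w_eq_evalFun (e : LEval) {α : LForm} (hα : α ∈ Form1) :
    e.w α = evalFun (fun _ => e.w LForm.X1) α := by
  induction α with
  | var n => cases (hα : n = 0); rfl
  | bot => exact e.map_bot
  | neg α ih => rw [e.map_neg, ih hα, evalFun]
  | imp α β ihα ihβ => rw [e.map_imp, ihα hα.1, ihβ hα.2, evalFun]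

theorem mem_Theta_iff {r : ℝ} (hr : r ∈ Icc (0 : ℝ) 1) {α : LForm} :
    α ∈ Theta r ↔ α ∈ Form1 ∧ evalFun (fun _ => r) α = 1 := by
  refine ⟨fun h => ⟨h.1, h.2 (.ofAssignment _ fun _ => hr) rfl⟩, fun h => ⟨h.1, fun e he => ?_⟩⟩
  rw [e.w_eq_evalFun h.1, he, h.2]

theorem LProv.evalFun_eq_one {S : Set LForm} {α : LForm} (h : LProv S α) {x : ℝ}
    (hx : x ∈ Icc (0 : ℝ) 1) (hS : ∀ β ∈ S, evalFun (fun _ => x) β = 1) :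
    evalFun (fun _ => x) α = 1 :=
  h.sound (.ofAssignment _ fun _ => hx) hS

theorem LProv.mem_Theta {S : Set LForm} {α : LForm} {r : ℝ} (h : LProv S α)
    (hS : S ⊆ Theta r) (hα : α ∈ Form1) : α ∈ Theta r :=
  ⟨hα, fun e he => h.sound e fun _ hβ => (hS hβ).2 e he⟩

def FinitelyAxiomatisable (T : Set LForm) : Prop :=
  ∃ S ⊆ Form1, S.Finite ∧ T = {α | α ∈ Form1 ∧ LProv S α}

def depthOneOver (C : Set LForm) : Set LForm :=
  insert LForm.X1 (insert LForm.bot (C ∪ image2 LForm.imp C C ∪ LForm.neg '' C))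

def comparisonAxioms (r : ℝ) (C : Set LForm) : Set LForm :=
  Theta r ∩ (image2 LForm.imp (depthOneOver C) (depthOneOver C) ∪ C)

section ComparisonAxioms

variable {r : ℝ} {C : Set LForm}

theorem Set.Finite.depthOneOver (hC : C.Finite) : (depthOneOver C).Finite :=
  (((hC.union (hC.image2 _ hC)).union (hC.image _)).insert _).insert _

theorem Set.Finite.comparisonAxioms (hC : C.Finite) : (comparisonAxioms r C).Finite :=
  ((hC.depthOneOver.image2 _ hC.depthOneOver).union hC).inter_of_right _

theorem depthOneOver_subset_Form1 (hC : C ⊆ Form1) : depthOneOver C ⊆ Form1 := by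
  rintro φ (rfl | rfl | (hφ | ⟨γ, hγ, δ, hδ, rfl⟩) | ⟨γ, hγ, rfl⟩)
  exacts [rfl, trivial, hC hφ, ⟨hC hγ, hC hδ⟩, (hC hγ : γ.onlyX1)]

theorem provEquiv_comparisonAxioms (hr : r ∈ Icc (0 : ℝ) 1) (hC : C ⊆ Form1) {φ ψ : LForm}
    (hφ : φ ∈ depthOneOver C) (hψ : ψ ∈ depthOneOver C)
    (h : evalFun (fun _ => r) φ = evalFun (fun _ => r) ψ) :
    ProvEquiv (comparisonAxioms r C) φ ψ := by
  have hmem {φ ψ} (hφ : φ ∈ depthOneOver C) (hψ : ψ ∈ depthOneOver C)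
      (h : evalFun (fun _ => r) φ = evalFun (fun _ => r) ψ) :
      φ.imp ψ ∈ comparisonAxioms r C := by
    refine ⟨(mem_Theta_iff hr).2 ⟨?_, ?_⟩, .inl (mem_image2_of_mem hφ hψ)⟩
    · exact ⟨depthOneOver_subset_Form1 hC hφ, depthOneOver_subset_Form1 hC hψ⟩
    · simp only [evalFun, h, sub_self, sub_zero, min_self]
  exact ⟨.hyp (hmem hφ hψ h), .hyp (hmem hψ hφ h.symm)⟩

theorem exists_provEquiv_comparisonAxioms (hr : r ∈ Icc (0 : ℝ) 1) (hC : C ⊆ Form1)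
    (hval : ∀ α ∈ Form1, ∃ γ ∈ C, evalFun (fun _ => r) γ = evalFun (fun _ => r) α)
    {α : LForm} (hα : α ∈ Form1) :
    ∃ γ ∈ C, evalFun (fun _ => r) γ = evalFun (fun _ => r) α ∧
      ProvEquiv (comparisonAxioms r C) α γ := by
  have close {α δ} (hα : α ∈ Form1) (hδ : δ ∈ depthOneOver C)
      (hv : evalFun (fun _ => r) δ = evalFun (fun _ => r) α)
      (he : ProvEquiv (comparisonAxioms r C) α δ) :
      ∃ γ ∈ C, evalFun (fun _ => r) γ = evalFun (fun _ => r) α ∧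
        ProvEquiv (comparisonAxioms r C) α γ := by
    obtain ⟨γ, hγ, hγv⟩ := hval α hα
    exact ⟨γ, hγ, hγv, he.trans (provEquiv_comparisonAxioms hr hC hδ
      (by simp [depthOneOver, hγ]) (hv.trans hγv.symm))⟩
  induction α with
  | var n =>
    obtain ⟨γ, hγ, hγv⟩ := hval _ hα
    cases (hα : n = 0)
    exact ⟨γ, hγ, hγv, provEquiv_comparisonAxioms hr hC
      (by simp [depthOneOver, LForm.X1]) (by simp [depthOneOver, hγ]) hγv.symm⟩
  | bot =>
    obtain ⟨γ, hγ, hγv⟩ := hval _ hα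
    exact ⟨γ, hγ, hγv, provEquiv_comparisonAxioms hr hC
      (by simp [depthOneOver]) (by simp [depthOneOver, hγ]) hγv.symm⟩
  | neg α ih =>
    obtain ⟨γ, hγ, hγv, he⟩ := ih hα
    exact close hα (by simp [depthOneOver, hγ])
      (by simp only [evalFun, hγv]) he.neg
  | imp α β ihα ihβ =>
    obtain ⟨γ, hγ, hγv, heα⟩ := ihα hα.1
    obtain ⟨δ, hδ, hδv, heβ⟩ := ihβ hα.2
    exact close hα (by simp [depthOneOver, hγ, hδ])
      (by simp only [evalFun, hγv, hδv]) (heα.imp heβ)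

theorem Theta_eq_comparisonAxioms (hr : r ∈ Icc (0 : ℝ) 1) (hC : C ⊆ Form1)
    (hval : ∀ α ∈ Form1, ∃ γ ∈ C, evalFun (fun _ => r) γ = evalFun (fun _ => r) α) :
    Theta r = {α | α ∈ Form1 ∧ LProv (comparisonAxioms r C) α} := by
  ext α
  refine ⟨fun h => ⟨h.1, ?_⟩, fun h => h.2.mem_Theta inter_subset_left h.1⟩
  obtain ⟨γ, hγ, hγv, he⟩ := exists_provEquiv_comparisonAxioms hr hC hval h.1
  have hγΘ : γ ∈ Theta r := (mem_Theta_iff hr).2 ⟨hC hγ, hγv.trans ((mem_Theta_iff hr).1 h).2⟩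
  exact .mp he.2 (.hyp ⟨hγΘ, .inr hγ⟩)

theorem finitelyAxiomatisable_Theta_of_finite_image (hr : r ∈ Icc (0 : ℝ) 1)
    (hV : (evalFun (fun _ => r) '' Form1).Finite) : FinitelyAxiomatisable (Theta r) := by
  obtain ⟨C, hC, hbij⟩ := exists_subset_bijOn Form1 (evalFun fun _ => r)
  have hCfin : C.Finite := Finite.of_finite_image (hbij.image_eq ▸ hV) hbij.injOn
  have hval : ∀ α ∈ Form1, ∃ γ ∈ C, evalFun (fun _ => r) γ = evalFun (fun _ => r) α :=
    fun α hα => hbij.surjOn (mem_image_of_mem _ hα)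
  exact ⟨comparisonAxioms r C, inter_subset_left.trans fun _ h => h.1,
    hCfin.comparisonAxioms, Theta_eq_comparisonAxioms hr hC hval⟩

end ComparisonAxioms

theorem evalFun_ratCast_mem_zmultiples (q : ℚ) (α : LForm) :
    evalFun (fun _ => (q : ℝ)) α ∈ AddSubgroup.zmultiples ((q.den : ℝ)⁻¹) := by
  have hone : (1 : ℝ) ∈ AddSubgroup.zmultiples ((q.den : ℝ)⁻¹) :=
    ⟨q.den, by simp [zsmul_eq_mul, q.den_nz]⟩
  induction α with
  | var n => exact ⟨q.num, by simp [evalFun, zsmul_eq_mul, Rat.cast_def, div_eq_mul_inv]⟩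
  | bot => exact zero_mem _
  | neg α ih => exact sub_mem hone ih
  | imp α β ihα ihβ =>
    rcases min_choice 1 (1 - (evalFun (fun _ => (q : ℝ)) α - evalFun (fun _ => (q : ℝ)) β))
      with h | h <;> rw [evalFun, h]
    exacts [hone, sub_mem hone (sub_mem ihα ihβ)]

theorem finite_range_evalFun_ratCast {q : ℚ} (hq : (q : ℝ) ∈ Icc (0 : ℝ) 1) :
    (range (evalFun fun _ => (q : ℝ))).Finite := by
  refine (Metric.finite_isBounded_inter_isClosed
    (SetLike.isDiscrete_iff_discreteTopology.2 inferInstance)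
    (Metric.isBounded_Icc 0 1)
    (AddSubgroup.zmultiples ((q.den : ℝ)⁻¹)).isClosed_of_discrete).subset ?_
  rintro _ ⟨α, rfl⟩
  exact ⟨evalFun_mem_Icc (fun _ => hq) α, evalFun_ratCast_mem_zmultiples q α⟩

theorem finitelyAxiomatisable_Theta_ratCast {q : ℚ} (hq : (q : ℝ) ∈ Icc (0 : ℝ) 1) :
    FinitelyAxiomatisable (Theta q) :=
  finitelyAxiomatisable_Theta_of_finite_image hq
    ((finite_range_evalFun_ratCast hq).subset (image_subset_range _ _))

section Irrational

variable {r : ℝ}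

theorem eventually_min_one_intCast_mul_add (hr : Irrational r) (a b : ℤ) :
    ∃ c d : ℤ, ∀ᶠ x in 𝓝 r, min 1 ((a : ℝ) * x + b) = c * x + d := by
  have hcont : Continuous fun x : ℝ => (a : ℝ) * x + b := by fun_prop
  rcases lt_trichotomy ((a : ℝ) * r + b) 1 with h | h | h
  · exact ⟨a, b, (hcont.continuousAt.eventually_lt continuousAt_const h).mono
      fun x hx => min_eq_right hx.le⟩
  · obtain rfl : a = 0 := by
      by_contra ha
      exact ((hr.intCast_mul ha).add_intCast b).ne_one h
    exact ⟨0, 1, .of_forall fun x => by simp_all⟩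
  · exact ⟨0, 1, (continuousAt_const.eventually_lt hcont.continuousAt h).mono
      fun x hx => by simp [hx.le]⟩

theorem exists_intCast_eventually_evalFun_eq (hr : Irrational r) (α : LForm) :
    ∃ a b : ℤ, ∀ᶠ x in 𝓝 r, evalFun (fun _ => x) α = a * x + b := by
  induction α with
  | var n => exact ⟨1, 0, .of_forall fun x => by simp [evalFun]⟩
  | bot => exact ⟨0, 0, .of_forall fun x => by simp [evalFun]⟩
  | neg α ih =>
    obtain ⟨a, b, h⟩ := ih
    exact ⟨-a, 1 - b, h.mono fun x hx => by rw [evalFun, hx]; push_cast; ring⟩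
  | imp α β ihα ihβ =>
    obtain ⟨a, b, ha⟩ := ihα
    obtain ⟨c, d, hc⟩ := ihβ
    obtain ⟨e, f, hef⟩ := eventually_min_one_intCast_mul_add hr (c - a) (1 - b + d)
    refine ⟨e, f, (ha.and (hc.and hef)).mono fun x hx => ?_⟩
    obtain ⟨hax, hcx, hx⟩ := hx
    rw [evalFun, hax, hcx, ← hx]
    push_cast
    congr 1
    ring

theorem eventually_evalFun_eq_one (hr : Irrational r) {α : LForm}
    (h : evalFun (fun _ => r) α = 1) : ∀ᶠ x in 𝓝 r, evalFun (fun _ => x) α = 1 := by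
  obtain ⟨a, b, hab⟩ := exists_intCast_eventually_evalFun_eq hr α
  have hr1 : (a : ℝ) * r + b = 1 := hab.self_of_nhds ▸ h
  obtain rfl : a = 0 := by
    by_contra ha
    exact ((hr.intCast_mul ha).add_intCast b).ne_one hr1
  exact hab.mono fun x hx => by simp_all

end Irrational

def LForm.odot (α β : LForm) : LForm := (α.imp β.neg).neg

def LForm.nsmul : ℕ → LForm → LForm
  | 0, _ => LForm.bot
  | n + 1, α => α.oplus (LForm.nsmul n α)

theorem LForm.nsmul_mem_Form1 {α : LForm} (hα : α ∈ Form1) (n : ℕ) : α.nsmul n ∈ Form1 := by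
  induction n with
  | zero => trivial
  | succ n ih => exact ⟨hα, ih⟩

section Evaluation

variable {v : ℕ → ℝ} {α β : LForm}

theorem evalFun_oplus : evalFun v (α.oplus β) = min 1 (evalFun v α + evalFun v β) := by
  simp only [LForm.oplus, evalFun]
  congr 1
  ring

theorem evalFun_odot : evalFun v (α.odot β) = max 0 (evalFun v α + evalFun v β - 1) := by
  simp only [LForm.odot, evalFun, min_def, max_def]
  split_ifs <;> linarith

theorem evalFun_nsmul (hα : 0 ≤ evalFun v α) (n : ℕ) :
    evalFun v (α.nsmul n) = min 1 (n * evalFun v α) := by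
  induction n with
  | zero => simp [LForm.nsmul, evalFun]
  | succ n ih =>
    rw [LForm.nsmul, evalFun_oplus, ih, min_def, min_def, min_def]
    push_cast
    split_ifs <;> nlinarith

end Evaluation

def IsRamp (γ : LForm) (s h : ℝ) : Prop :=
  ∀ x ∈ Icc s (s + h), evalFun (fun _ => x) γ = (x - s) / h

namespace IsRamp

variable {γ : LForm} {s h : ℝ}

theorem oplus_self (hγ : IsRamp γ s h) (hh : 0 < h) : IsRamp (γ.oplus γ) s (h / 2) := by
  intro x hx
  have hle : (x - s) / h ≤ 1 / 2 := by rw [div_le_iff₀ hh]; linarith [hx.2]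
  rw [evalFun_oplus, hγ x ⟨hx.1, by linarith [hx.2]⟩, min_eq_right (by linarith)]
  ring

theorem odot_self (hγ : IsRamp γ s h) (hh : 0 < h) :
    IsRamp (γ.odot γ) (s + h / 2) (h / 2) := by
  intro x hx
  have hge : 1 / 2 ≤ (x - s) / h := by rw [le_div_iff₀ hh]; linarith [hx.1]
  rw [evalFun_odot, hγ x ⟨by linarith [hx.1], by linarith [hx.2]⟩, max_eq_right (by linarith)]
  field_simp
  ring

end IsRamp

theorem exists_isRamp {r : ℝ} (hr : Irrational r) (h01 : r ∈ Icc (0 : ℝ) 1) (k : ℕ) :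
    ∃ γ ∈ Form1, ∃ s : ℚ, 0 ≤ s ∧ (s : ℝ) < r ∧ r < s + (1 / 2) ^ k ∧
      IsRamp γ s ((1 / 2) ^ k) := by
  induction k with
  | zero =>
    refine ⟨LForm.X1, rfl, 0, le_rfl, ?_, ?_, fun x _ => by simp [evalFun, LForm.X1]⟩
    · simpa using h01.1.lt_of_ne (by simpa using (hr.ne_rat 0).symm)
    · simpa using h01.2.lt_of_ne hr.ne_one
  | succ k ih =>
    obtain ⟨γ, hγ, s, hs0, hsr, hrs, hramp⟩ := ih
    have hh : (0 : ℝ) < (1 / 2) ^ k := by positivity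
    have hhalf : ((1 : ℝ) / 2) ^ (k + 1) = (1 / 2) ^ k / 2 := by ring
    -- keep the half of `[s, s + 2⁻ᵏ]` containing `r`, which is not the rational midpoint
    rcases (hr.ne_rat (s + (1 / 2) ^ (k + 1))).lt_or_gt with hlt | hgt
    · push_cast at hlt
      refine ⟨γ.oplus γ, ⟨hγ, hγ⟩, s, hs0, hsr, hlt, ?_⟩
      rw [hhalf]
      exact hramp.oplus_self hh
    · push_cast at hgt
      refine ⟨γ.odot γ, ⟨hγ, hγ⟩, s + (1 / 2) ^ (k + 1), by positivity, by push_cast; exact hgt,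
        by push_cast; linarith, ?_⟩
      push_cast
      rw [hhalf]
      exact hramp.odot_self hh

theorem exists_mem_Theta_evalFun_eq_zero {r : ℝ} (hr : Irrational r) (h01 : r ∈ Icc (0 : ℝ) 1)
    {U : Set ℝ} (hU : U ∈ 𝓝 r) : ∃ φ ∈ Theta r, ∃ x ∈ U ∩ Icc 0 1, evalFun (fun _ => x) φ = 0 := by
  obtain ⟨ε, hε, hball⟩ := Metric.mem_nhds_iff.1 hU
  obtain ⟨k, hk⟩ := exists_pow_lt_of_lt_one hε (by norm_num : (1 / 2 : ℝ) < 1)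
  obtain ⟨γ, hγ, s, hs0, hsr, hrs, hramp⟩ := exists_isRamp hr h01 k
  have hγr : 0 < evalFun (fun _ => r) γ := by
    rw [hramp r ⟨hsr.le, hrs.le⟩]
    exact div_pos (by linarith) (by positivity)
  have hγs : evalFun (fun _ => (s : ℝ)) γ = 0 := by
    rw [hramp s ⟨le_rfl, by linarith⟩, sub_self, zero_div]
  set M := ⌈(evalFun (fun _ => r) γ)⁻¹⌉₊
  have hM : 1 ≤ M * evalFun (fun _ => r) γ := by
    rw [← inv_le_iff_one_le_mul₀ hγr]
    exact Nat.le_ceil _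
  refine ⟨γ.nsmul M, (mem_Theta_iff h01).2 ⟨γ.nsmul_mem_Form1 hγ M, ?_⟩, s,
    ⟨hball ?_, by exact_mod_cast hs0, by linarith [h01.2]⟩, ?_⟩
  · rw [evalFun_nsmul hγr.le, min_eq_left hM]
  · rw [Metric.mem_ball, Real.dist_eq, abs_sub_lt_iff]
    constructor <;> linarith
  · rw [evalFun_nsmul hγs.ge, hγs, mul_zero, min_eq_right zero_le_one]

theorem not_finitelyAxiomatisable_Theta {r : ℝ} (hr : Irrational r) (h01 : r ∈ Icc (0 : ℝ) 1) :
    ¬ FinitelyAxiomatisable (Theta r) := by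
  rintro ⟨S, hS1, hSfin, hS⟩
  have hSr (β) (hβ : β ∈ S) : evalFun (fun _ => r) β = 1 :=
    ((mem_Theta_iff h01).1 (hS ▸ ⟨hS1 hβ, .hyp hβ⟩)).2
  have hU : ∀ᶠ x in 𝓝 r, ∀ β ∈ S, evalFun (fun _ => x) β = 1 :=
    (hSfin.eventually_all).2 fun β hβ => eventually_evalFun_eq_one hr (hSr β hβ)
  obtain ⟨φ, hφ, x, ⟨hxS, hx01⟩, hφx⟩ := exists_mem_Theta_evalFun_eq_zero hr h01 hU
  rw [hS] at hφ
  simp [hφ.2.evalFun_eq_one hx01 hxS] at hφx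

/-- Finite axiomatisability criterion: for r ∈ [0,1], the theory Θ_r is
finitely axiomatisable in Ł₁ iff r is rational. -/
theorem Theta_finitely_axiomatisable_iff_rational (r : ℝ)
    (hr : r ∈ Set.Icc (0 : ℝ) 1) :
    (∃ S : Set LForm, S ⊆ Form1 ∧ S.Finite ∧
        Theta r = {α | α ∈ Form1 ∧ LProv S α}) ↔
      ∃ q : ℚ, (q : ℝ) = r := by
  refine ⟨fun h => ?_, ?_⟩
  · by_contra hirr
    exact not_finitelyAxiomatisable_Theta hirr hr h
  · rintro ⟨q, rfl⟩
    exact finitelyAxiomatisable_Theta_ratCast hr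
end
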